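/- arXiv:1007.4544 — 2 statements merged into one kernel-verified Lean document; each statement's English description precedes it below -/
import Mathlib

section
/- Let ρ be an n×n positive definite Hermitian matrix. Then the function σ ↦ Tr(ρ log σ) is strictly concave on the set of positive definite n×n Hermitian matrices: for σ ≠ η positive definite and s ∈ (0,1), Tr(ρ((1-s)log σ + s log η)) < Tr(ρ log((1-s)σ + sη)). -/
/-!
Integrating the resolvent gives `log x = ∫₀^∞ ((1 + t)⁻¹ - (x + t)⁻¹) dt` for `x > 0`; applied to
the eigenvalues this turns `Tr(ρ log σ)` into the integral over `t > 0` of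
`(1 + t)⁻¹ Tr ρ - Tr(ρ (σ + t)⁻¹)`. Each integrand is strictly concave in `σ`, because
`A ↦ Tr(ρ A⁻¹)` is strictly convex: with `C = aA + bB` one has
`aA⁻¹ + bB⁻¹ - C⁻¹ = ab · D (bA⁻¹ + aB⁻¹)⁻¹ D` for the nonzero Hermitian `D = A⁻¹ - B⁻¹`,
whose trace against `ρ > 0` is positive. Strict concavity survives integration.
-/

open ComplexOrder

/-- Hermitian-ness of real linear combinations of Hermitian complex matrices. -/
lemma isHermitian_smul_add_smul {n : ℕ} {A B : Matrix (Fin n) (Fin n) ℂ}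
    (hA : A.IsHermitian) (hB : B.IsHermitian) (a b : ℝ) :
    (a • A + b • B).IsHermitian := by
  unfold Matrix.IsHermitian at *
  rw [Matrix.conjTranspose_add, Matrix.conjTranspose_smul, Matrix.conjTranspose_smul,
    hA, hB, star_trivial, star_trivial]

/-- The logarithm of a Hermitian matrix, via the spectral decomposition. -/
noncomputable def matLog {n : ℕ} {A : Matrix (Fin n) (Fin n) ℂ} (hA : A.IsHermitian) :
    Matrix (Fin n) (Fin n) ℂ :=
  hA.cfc Real.log

open scoped MatrixOrder
open MeasureTheory Set Filter Topology

theorem hasDerivAt_log_one_add_sub_log_add {a t : ℝ} (h1 : 1 + t ≠ 0) (ha : a + t ≠ 0) :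
    HasDerivAt (fun t => Real.log (1 + t) - Real.log (a + t)) ((1 + t)⁻¹ - (a + t)⁻¹) t := by
  simpa using (((hasDerivAt_id t).const_add 1).log h1).fun_sub
    (((hasDerivAt_id t).const_add a).log ha)

theorem tendsto_log_one_add_sub_log_add_atTop (a : ℝ) :
    Tendsto (fun t => Real.log (1 + t) - Real.log (a + t)) atTop (𝓝 0) := by
  have h : Tendsto (fun t : ℝ => 1 + (1 - a) / (a + t)) atTop (𝓝 1) := by
    simpa using tendsto_const_nhds.add
      (tendsto_const_nhds.div_atTop (tendsto_atTop_add_const_left _ a tendsto_id))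
  have hlog := (Real.continuousAt_log one_ne_zero).tendsto.comp h
  rw [Real.log_one] at hlog
  refine hlog.congr' ?_
  filter_upwards [eventually_gt_atTop (|a| + 1)] with t ht
  have h1 : 0 < 1 + t := by linarith [abs_nonneg a]
  have ha : 0 < a + t := by linarith [neg_abs_le a]
  rw [Function.comp_apply, ← Real.log_div h1.ne' ha.ne']
  congr 1
  field_simp
  ring

theorem integrableOn_inv_one_add_sub_inv_add {a : ℝ} (ha : 0 < a) :
    IntegrableOn (fun t => (1 + t)⁻¹ - (a + t)⁻¹) (Ioi 0) := by
  have hderiv (t : ℝ) (ht : t ∈ Ici 0) := hasDerivAt_log_one_add_sub_log_add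
    (by linarith [mem_Ici.1 ht] : 1 + t ≠ 0) (by linarith [mem_Ici.1 ht] : a + t ≠ 0)
  rcases le_total 1 a with h | h
  · refine integrableOn_Ioi_deriv_of_nonneg' hderiv (fun t (ht : 0 < t) => ?_)
      (tendsto_log_one_add_sub_log_add_atTop a)
    exact sub_nonneg.2 (inv_anti₀ (by positivity) (by linarith))
  · refine integrableOn_Ioi_deriv_of_nonpos' hderiv (fun t (ht : 0 < t) => ?_)
      (tendsto_log_one_add_sub_log_add_atTop a)
    exact sub_nonpos.2 (inv_anti₀ (by positivity) (by linarith))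

theorem integral_inv_one_add_sub_inv_add {a : ℝ} (ha : 0 < a) :
    ∫ t in Ioi 0, ((1 + t)⁻¹ - (a + t)⁻¹) = Real.log a := by
  have hderiv (t : ℝ) (ht : t ∈ Ici 0) := hasDerivAt_log_one_add_sub_log_add
    (by linarith [mem_Ici.1 ht] : 1 + t ≠ 0) (by linarith [mem_Ici.1 ht] : a + t ≠ 0)
  rw [integral_Ioi_of_hasDerivAt_of_tendsto' hderiv (integrableOn_inv_one_add_sub_inv_add ha)
    (tendsto_log_one_add_sub_log_add_atTop a)]
  simp

theorem StrictConcaveOn.integral {E α : Type*} [AddCommGroup E] [Module ℝ E]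
    [MeasurableSpace α] {μ : Measure α} [NeZero μ] {s : Set E} {G : E → α → ℝ}
    (hint : ∀ x ∈ s, Integrable (G x) μ) (hG : ∀ᵐ t ∂μ, StrictConcaveOn ℝ s (G · t)) :
    StrictConcaveOn ℝ s (fun x => ∫ t, G x t ∂μ) := by
  obtain ⟨_, hs, -⟩ := hG.exists
  refine ⟨hs, fun x hx y hy hxy a b ha hb hab => ?_⟩
  have hxy' : a • x + b • y ∈ s := hs hx hy ha.le hb.le hab
  have hsum : Integrable (fun t => a * G x t + b * G y t) μ :=
    ((hint x hx).const_mul a).add ((hint y hy).const_mul b)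
  have hgap : 0 < ∫ t, (G (a • x + b • y) t - (a * G x t + b * G y t)) ∂μ := by
    have hpos : ∀ᵐ t ∂μ, 0 < G (a • x + b • y) t - (a * G x t + b * G y t) := by
      filter_upwards [hG] with t ht
      exact sub_pos.2 (ht.2 hx hy hxy ha hb hab)
    refine (integral_nonneg_of_ae (hpos.mono fun t ht => ht.le)).lt_of_ne fun h => ?_
    rw [eq_comm, integral_eq_zero_iff_of_nonneg_ae (hpos.mono fun t ht => ht.le)
      ((hint _ hxy').sub hsum)] at h
    obtain ⟨t, ht, ht0⟩ := (hpos.and h).exists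
    exact ht.ne' ht0
  rw [integral_sub (hint _ hxy') hsum,
    integral_add ((hint x hx).const_mul a) ((hint y hy).const_mul b), integral_const_mul,
    integral_const_mul] at hgap
  simpa [smul_eq_mul] using hgap

namespace Matrix

theorem convex_setOf_posDef {n 𝕜 : Type*} [RCLike 𝕜] :
    Convex ℝ {A : Matrix n n 𝕜 | A.PosDef} :=
  convex_iff_forall_pos.2 fun _ hA _ hB _ _ ha hb _ => (hA.smul ha).add (hB.smul hb)

variable {n 𝕜 : Type*} [Fintype n] [DecidableEq n] [RCLike 𝕜]

theorem PosDef.trace_mul_mul_conjTranspose_pos {m : Type*} [Fintype m] {ρ : Matrix n n 𝕜}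
    (hρ : ρ.PosDef) {X : Matrix m n 𝕜} (hX : X ≠ 0) : 0 < (X * ρ * Xᴴ).trace := by
  obtain ⟨y, hy, rfl⟩ := CStarAlgebra.isStrictlyPositive_iff_eq_star_mul_self.mp
    hρ.isStrictlyPositive
  have hyX : y * Xᴴ ≠ 0 := fun h => hX <| by
    rw [← conjTranspose_eq_zero,
      ← nonsing_inv_mul_cancel_left (A := y) Xᴴ ((isUnit_iff_isUnit_det y).1 hy), h,
      Matrix.mul_zero]
  have hprod : X * (star y * y) * Xᴴ = (y * Xᴴ)ᴴ * (y * Xᴴ) := by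
    simp only [conjTranspose_mul, conjTranspose_conjTranspose, star_eq_conjTranspose,
      Matrix.mul_assoc]
  rw [hprod]
  exact (posSemidef_conjTranspose_mul_self _).trace_nonneg.lt_of_ne'
    (trace_conjTranspose_mul_self_eq_zero_iff.not.2 hyX)

theorem PosDef.trace_mul_conjTranspose_mul_mul_pos {ρ M : Matrix n n 𝕜} (hρ : ρ.PosDef)
    (hM : M.PosDef) {X : Matrix n n 𝕜} (hX : X ≠ 0) : 0 < (ρ * (Xᴴ * M * X)).trace := by
  obtain ⟨y, hy, rfl⟩ := CStarAlgebra.isStrictlyPositive_iff_eq_star_mul_self.mp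
    hM.isStrictlyPositive
  have hyX : y * X ≠ 0 := by rwa [Ne, hy.mul_right_eq_zero]
  rw [trace_mul_comm, show Xᴴ * (star y * y) * X * ρ = (y * X)ᴴ * ((y * X) * ρ) by
    simp [conjTranspose_mul, star_eq_conjTranspose, mul_assoc], trace_mul_comm]
  exact hρ.trace_mul_mul_conjTranspose_pos hyX

theorem smul_inv_add_smul_inv_sub_inv {A B : Matrix n n 𝕜} (hA : IsUnit A) (hB : IsUnit B)
    {a b : ℝ} (hab : a + b = 1) (hC : IsUnit (a • A + b • B)) :
    a • A⁻¹ + b • B⁻¹ - (a • A + b • B)⁻¹ =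
      (a * b) • ((A⁻¹ - B⁻¹) * (b • A⁻¹ + a • B⁻¹)⁻¹ * (A⁻¹ - B⁻¹)) := by
  set C := a • A + b • B with hC_def
  obtain rfl : a = 1 - b := by linarith
  rw [isUnit_iff_isUnit_det] at hA hB hC
  have hinvA := nonsing_inv_mul A hA
  have hAinv := mul_nonsing_inv A hA
  have hinvB := nonsing_inv_mul B hB
  have hBinv := mul_nonsing_inv B hB
  have hinvC := nonsing_inv_mul C hC
  have hCinv := mul_nonsing_inv C hC
  have hinvA_C : A⁻¹ * C = (1 - b) • 1 + b • (A⁻¹ * B) := by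
    rw [hC_def, Matrix.mul_add, Matrix.mul_smul, Matrix.mul_smul, hinvA]
  have hC_invB : C * B⁻¹ = (1 - b) • (A * B⁻¹) + b • 1 := by
    rw [hC_def, Matrix.add_mul, Matrix.smul_mul, Matrix.smul_mul, hBinv]
  have hW : (b • A⁻¹ + (1 - b) • B⁻¹)⁻¹ = B * C⁻¹ * A := by
    refine inv_eq_right_inv ?_
    calc (b • A⁻¹ + (1 - b) • B⁻¹) * (B * C⁻¹ * A)
        = ((1 - b) • 1 + b • (A⁻¹ * B)) * C⁻¹ * A := by
          simp only [Matrix.add_mul, Matrix.smul_mul, ← Matrix.mul_assoc, hinvB]; abel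
      _ = 1 := by rw [← hinvA_C, Matrix.mul_assoc A⁻¹, hCinv, Matrix.mul_one, hinvA]
  have hinvA_C_invB : A⁻¹ * C * B⁻¹ = (1 - b) • B⁻¹ + b • A⁻¹ := by
    rw [Matrix.mul_assoc, hC_invB, Matrix.mul_add, Matrix.mul_smul, Matrix.mul_smul,
      ← Matrix.mul_assoc, hinvA, Matrix.one_mul, Matrix.mul_one]
  -- `C - A = b • (B - A)` and `B - C = (1 - b) • (B - A)`: the defect is
  -- `A⁻¹ (C - A) C⁻¹ (B - C) B⁻¹`, and both outer factors carry a copy of `A⁻¹ - B⁻¹`.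
  have hleft : A⁻¹ * C - 1 = b • ((A⁻¹ - B⁻¹) * B) := by
    rw [hinvA_C, Matrix.sub_mul, hinvB]; module
  have hright : 1 - C * B⁻¹ = (1 - b) • (A * (A⁻¹ - B⁻¹)) := by
    rw [hC_invB, Matrix.mul_sub, hAinv]; module
  calc (1 - b) • A⁻¹ + b • B⁻¹ - C⁻¹ = A⁻¹ - C⁻¹ - A⁻¹ * C * B⁻¹ + B⁻¹ := by
        rw [hinvA_C_invB]; module
    _ = A⁻¹ * (C * C⁻¹) - C⁻¹ - A⁻¹ * (C * C⁻¹) * C * B⁻¹ + C⁻¹ * C * B⁻¹ := by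
        rw [hCinv, hinvC, Matrix.mul_one, Matrix.one_mul]
    _ = (A⁻¹ * C - 1) * C⁻¹ * (1 - C * B⁻¹) := by noncomm_ring
    _ = ((1 - b) * b) • ((A⁻¹ - B⁻¹) * (B * C⁻¹ * A) * (A⁻¹ - B⁻¹)) := by
        rw [hleft, hright]
        simp only [Matrix.smul_mul, Matrix.mul_smul, smul_smul, Matrix.mul_assoc]
    _ = _ := by rw [hW]

theorem strictConvexOn_re_trace_mul_inv {ρ : Matrix n n 𝕜} (hρ : ρ.PosDef) :
    StrictConvexOn ℝ {A : Matrix n n 𝕜 | A.PosDef} (fun A => RCLike.re (ρ * A⁻¹).trace) := by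
  refine ⟨convex_setOf_posDef, fun A hA B hB hAB a b ha hb hab => ?_⟩
  have hD : A⁻¹ - B⁻¹ ≠ 0 :=
    sub_ne_zero.2 fun h => hAB (inv_inj h ((isUnit_iff_isUnit_det A).1 hA.isUnit))
  have hW : (b • A⁻¹ + a • B⁻¹)⁻¹.PosDef := ((hA.inv.smul hb).add (hB.inv.smul ha)).inv
  have hC : (a • A + b • B).PosDef := (hA.smul ha).add (hB.smul hb)
  have hgap : 0 < RCLike.re (ρ * (a • A⁻¹ + b • B⁻¹ - (a • A + b • B)⁻¹)).trace := by
    have hpos := hρ.trace_mul_conjTranspose_mul_mul_pos hW hD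
    rw [(hA.inv.1.sub hB.inv.1).eq] at hpos
    rw [smul_inv_add_smul_inv_sub_inv hA.isUnit hB.isUnit hab hC.isUnit, Matrix.mul_smul,
      trace_smul, RCLike.smul_re]
    exact mul_pos (mul_pos ha hb) (RCLike.pos_iff.1 hpos).1
  simp only [Matrix.mul_sub, Matrix.mul_add, Matrix.mul_smul, trace_sub, trace_add, trace_smul,
    map_sub, map_add, RCLike.smul_re] at hgap
  simpa [smul_eq_mul] using hgap

theorem IsHermitian.re_trace_mul_cfc {M : Matrix n n 𝕜} (hM : M.IsHermitian)
    (ρ : Matrix n n 𝕜) (f : ℝ → ℝ) :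
    RCLike.re (ρ * cfc f M).trace = ∑ i, f (hM.eigenvalues i) *
      RCLike.re ((star (hM.eigenvectorUnitary : Matrix n n 𝕜) * ρ *
        hM.eigenvectorUnitary) i i) := by
  rw [hM.cfc_eq, IsHermitian.cfc, Unitary.conjStarAlgAut_apply, ← Matrix.mul_assoc,
    trace_mul_comm, ← Matrix.mul_assoc, ← Matrix.mul_assoc, trace, map_sum]
  refine Finset.sum_congr rfl fun i _ => ?_
  simp [mul_diagonal, mul_comm]

theorem PosDef.inv_add_smul_one {M : Matrix n n 𝕜} (hM : M.PosDef) {t : ℝ} (ht : 0 ≤ t) :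
    (M + t • 1)⁻¹ = cfc (fun x => (x + t)⁻¹) M := by
  have hspec : ∀ x ∈ spectrum ℝ M, x + t ≠ 0 := fun x hx =>
    (add_pos_of_pos_of_nonneg (hM.isStrictlyPositive.spectrum_pos hx) ht).ne'
  rw [nonsing_inv_eq_ringInverse, cfc_inv (fun x => x + t) M hspec,
    cfc_add_const t (fun x => x) M, cfc_id' ℝ M, Algebra.algebraMap_eq_smul_one]

noncomputable def traceLogIntegrand (ρ M : Matrix n n 𝕜) (t : ℝ) : ℝ :=
  (1 + t)⁻¹ * RCLike.re ρ.trace - RCLike.re (ρ * (M + t • 1)⁻¹).trace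

theorem PosDef.traceLogIntegrand_eq_sum {M : Matrix n n 𝕜} (hM : M.PosDef) (ρ : Matrix n n 𝕜)
    {t : ℝ} (ht : 0 ≤ t) :
    traceLogIntegrand ρ M t = ∑ i, ((1 + t)⁻¹ - (hM.1.eigenvalues i + t)⁻¹) *
      RCLike.re ((star (hM.1.eigenvectorUnitary : Matrix n n 𝕜) * ρ *
        hM.1.eigenvectorUnitary) i i) := by
  have htr := hM.1.re_trace_mul_cfc ρ 1
  rw [cfc_one ℝ M, Matrix.mul_one] at htr
  simp only [traceLogIntegrand, hM.inv_add_smul_one ht, hM.1.re_trace_mul_cfc, htr,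
    Pi.one_apply, one_mul, Finset.mul_sum, ← Finset.sum_sub_distrib, sub_mul]

theorem PosDef.integrableOn_traceLogIntegrand {M : Matrix n n 𝕜} (hM : M.PosDef)
    (ρ : Matrix n n 𝕜) : IntegrableOn (traceLogIntegrand ρ M) (Ioi 0) := by
  refine IntegrableOn.congr_fun (integrable_finsetSum _ fun i _ =>
      (integrableOn_inv_one_add_sub_inv_add (hM.eigenvalues_pos i)).mul_const _)
    (fun t (ht : 0 < t) => (hM.traceLogIntegrand_eq_sum ρ ht.le).symm) measurableSet_Ioi

theorem PosDef.integral_traceLogIntegrand {M : Matrix n n 𝕜} (hM : M.PosDef)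
    (ρ : Matrix n n 𝕜) :
    ∫ t in Ioi 0, traceLogIntegrand ρ M t = RCLike.re (ρ * cfc Real.log M).trace := by
  rw [setIntegral_congr_fun measurableSet_Ioi fun t (ht : 0 < t) =>
      hM.traceLogIntegrand_eq_sum ρ ht.le,
    integral_finsetSum _ fun i _ =>
      (integrableOn_inv_one_add_sub_inv_add (hM.eigenvalues_pos i)).mul_const _,
    hM.1.re_trace_mul_cfc]
  refine Finset.sum_congr rfl fun i _ => ?_
  rw [integral_mul_const, integral_inv_one_add_sub_inv_add (hM.eigenvalues_pos i)]

theorem strictConcaveOn_traceLogIntegrand {ρ : Matrix n n 𝕜} (hρ : ρ.PosDef) {t : ℝ}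
    (ht : 0 < t) : StrictConcaveOn ℝ {σ : Matrix n n 𝕜 | σ.PosDef} (traceLogIntegrand ρ · t) := by
  have hshift : {σ : Matrix n n 𝕜 | σ.PosDef} ⊆ (t • 1 + ·) ⁻¹' {A | A.PosDef} :=
    fun _ hσ => PosDef.posSemidef_add (PosSemidef.one.smul ht.le) hσ
  exact (concaveOn_const _ convex_setOf_posDef).sub_strictConvexOn
    (((strictConvexOn_re_trace_mul_inv hρ).translate_left (t • 1)).subset hshift
      convex_setOf_posDef)

theorem strictConcaveOn_re_trace_mul_log {ρ : Matrix n n 𝕜} (hρ : ρ.PosDef) :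
    StrictConcaveOn ℝ {σ : Matrix n n 𝕜 | σ.PosDef}
      (fun σ => RCLike.re (ρ * cfc Real.log σ).trace) := by
  have : NeZero (volume.restrict (Ioi (0 : ℝ))) := ⟨by simp⟩
  exact (StrictConcaveOn.integral (fun σ hσ => hσ.integrableOn_traceLogIntegrand ρ)
    (ae_restrict_of_forall_mem measurableSet_Ioi fun _ ht =>
      strictConcaveOn_traceLogIntegrand hρ ht)).congr
    fun σ hσ => hσ.integral_traceLogIntegrand ρ

end Matrix

theorem stmt_4 {n : ℕ} {ρ σ η : Matrix (Fin n) (Fin n) ℂ}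
    (hρ : ρ.PosDef) (hσ : σ.PosDef) (hη : η.PosDef) (hne : σ ≠ η)
    (s : ℝ) (hs0 : 0 < s) (hs1 : s < 1) :
    (ρ * ((1 - s) • matLog hσ.1 + s • matLog hη.1)).trace.re <
      (ρ * matLog (isHermitian_smul_add_smul hσ.1 hη.1 (1 - s) s)).trace.re := by
  have h := (Matrix.strictConcaveOn_re_trace_mul_log hρ).2 hσ hη hne (sub_pos.2 hs1) hs0
    (sub_add_cancel 1 s)
  simp only [matLog, ← Matrix.IsHermitian.cfc_eq]
  simpa [Matrix.mul_add, Matrix.trace_add] using h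
end

section
/- Let λ_1 ≥ λ_2 ≥ ... ≥ λ_m be real numbers with λ_1,...,λ_{m-1} > 0 and λ_m = -(λ_1 + ... + λ_{m-1}). Then there exists a real symmetric m×m matrix H with all diagonal entries zero whose eigenvalues are exactly λ_1,...,λ_m. -/
open Matrix Polynomial

/-- 2×2 rotation data: given `a ≥ 0 ≥ b`, coefficients `c, s` of a rotation
sending `diag (a, b)` to a matrix with diagonal `(a + b, 0)`. -/
private lemma rot_exists (a b : ℝ) (ha : 0 ≤ a) (hb : b ≤ 0) :
    ∃ c s : ℝ, c ^ 2 + s ^ 2 = 1 ∧ a * c ^ 2 + b * s ^ 2 = a + b ∧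
      a * s ^ 2 + b * c ^ 2 = 0 := by
  rcases eq_or_lt_of_le (sub_nonneg.mpr (hb.trans ha)) with h | h
  · have ha0 : a = 0 := le_antisymm (by linarith) ha
    have hb0 : b = 0 := by linarith
    exact ⟨1, 0, by norm_num, by simp [ha0, hb0], by simp [ha0, hb0]⟩
  · have hne : a - b ≠ 0 := ne_of_gt h
    have h1 : (0:ℝ) ≤ a / (a - b) := div_nonneg ha h.le
    have h2 : (0:ℝ) ≤ -b / (a - b) := div_nonneg (neg_nonneg.mpr hb) h.le
    refine ⟨Real.sqrt (a / (a - b)), Real.sqrt (-b / (a - b)), ?_, ?_, ?_⟩ <;>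
      rw [Real.sq_sqrt h1, Real.sq_sqrt h2] <;>
      field_simp <;> ring

/-- Core induction: if `d` sums to zero and all entries except possibly the last
are nonnegative, then there is an orthogonal matrix `Q` (rows orthonormal) such
that the conjugated diagonal matrix has zero diagonal. -/
private lemma coreLast (n : ℕ) : ∀ d : Fin (n + 1) → ℝ,
    (∀ i, i ≠ Fin.last n → 0 ≤ d i) → (∑ i, d i = 0) →
    ∃ Q : Matrix (Fin (n + 1)) (Fin (n + 1)) ℝ,
      (∀ i j, ∑ a, Q i a * Q j a = if i = j then 1 else 0) ∧
      (∀ i, ∑ a, d a * Q i a ^ 2 = 0) := by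
  induction n with
  | zero =>
    intro d _ hs
    have hd0 : d 0 = 0 := by simpa using hs
    refine ⟨1, ?_, ?_⟩
    · intro i j
      fin_cases i; fin_cases j
      simp [Matrix.one_apply]
    · intro i
      fin_cases i
      simp [hd0]
  | succ k ih =>
    intro d hd hs
    set A := d (Fin.castSucc (Fin.last k)) with hA
    set B := d (Fin.last (k + 1)) with hB
    have hApos : 0 ≤ A := hd _ (Fin.ne_of_lt (Fin.castSucc_lt_last _))
    have hcastsum : ∑ i : Fin (k + 1), d (Fin.castSucc i) + B = 0 := by
      rw [← Fin.sum_univ_castSucc]; exact hs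
    have hcast_nonneg : ∀ i : Fin (k + 1), 0 ≤ d (Fin.castSucc i) :=
      fun i => hd _ (Fin.ne_of_lt (Fin.castSucc_lt_last _))
    have hBneg : B ≤ 0 := by
      have := Finset.sum_nonneg (fun i (_ : i ∈ Finset.univ) => hcast_nonneg i)
      linarith
    obtain ⟨c, s, hcs, hmu, hzero⟩ := rot_exists A B hApos hBneg
    -- the smaller sequence : drop the last two entries, append `A + B`
    set e : Fin (k + 1) → ℝ :=
      Fin.snoc (fun i : Fin k => d (Fin.castSucc (Fin.castSucc i))) (A + B) with he
    have he_cast : ∀ i : Fin k, e (Fin.castSucc i) = d (Fin.castSucc (Fin.castSucc i)) :=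
      fun i => by rw [he]; exact Fin.snoc_castSucc _ _ _
    have he_last : e (Fin.last k) = A + B := by rw [he]; exact Fin.snoc_last _ _
    have hd' : ∀ i, i ≠ Fin.last k → 0 ≤ e i := by
      intro i hi
      obtain ⟨j, rfl⟩ : ∃ j : Fin k, Fin.castSucc j = i := by
        rcases Fin.eq_castSucc_or_eq_last i with ⟨j, rfl⟩ | rfl
        · exact ⟨j, rfl⟩
        · exact absurd rfl hi
      rw [he_cast]
      exact hcast_nonneg _
    have hs' : ∑ i, e i = 0 := by
      rw [Fin.sum_univ_castSucc]
      have h1 : ∑ i : Fin k, e (Fin.castSucc i)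
          = ∑ i : Fin k, d (Fin.castSucc (Fin.castSucc i)) :=
        Finset.sum_congr rfl fun i _ => he_cast i
      have h2 : ∑ i : Fin (k + 1), d (Fin.castSucc i)
          = ∑ i : Fin k, d (Fin.castSucc (Fin.castSucc i)) + A := by
        rw [Fin.sum_univ_castSucc]
      rw [h1, he_last]
      linarith [hcastsum, h2]
    obtain ⟨Q', hQo, hQd⟩ := ih e hd' hs'
    -- the big matrix
    refine ⟨Fin.snoc
        (fun i : Fin (k + 1) =>
          Fin.snoc
            (Fin.snoc (fun j : Fin k => Q' i (Fin.castSucc j)) (Q' i (Fin.last k) * c))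
            (Q' i (Fin.last k) * s))
        (Fin.snoc (Fin.snoc (fun _ : Fin k => (0 : ℝ)) (-s)) c), ?_, ?_⟩
    · intro i j
      induction i using Fin.lastCases with
      | cast i =>
        induction j using Fin.lastCases with
        | cast j =>
          rw [Fin.sum_univ_castSucc, Fin.sum_univ_castSucc]
          simp only [Fin.snoc_castSucc, Fin.snoc_last, Fin.castSucc_inj]
          have key := hQo i j
          rw [Fin.sum_univ_castSucc] at key
          rcases eq_or_ne i j with rfl | hij
          · simp only [if_pos rfl] at key ⊢
            linear_combination key + Q' i (Fin.last k) * Q' i (Fin.last k) * hcs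
          · simp only [if_neg hij] at key ⊢
            linear_combination key + Q' i (Fin.last k) * Q' j (Fin.last k) * hcs
        | last =>
          rw [Fin.sum_univ_castSucc, Fin.sum_univ_castSucc]
          simp only [Fin.snoc_castSucc, Fin.snoc_last]
          rw [if_neg (Fin.ne_of_lt (Fin.castSucc_lt_last _))]
          simp
          ring
      | last =>
        induction j using Fin.lastCases with
        | cast j =>
          rw [Fin.sum_univ_castSucc, Fin.sum_univ_castSucc]
          simp only [Fin.snoc_castSucc, Fin.snoc_last]
          rw [if_neg (Fin.ne_of_gt (Fin.castSucc_lt_last _))]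
          simp
          ring
        | last =>
          rw [Fin.sum_univ_castSucc, Fin.sum_univ_castSucc]
          simp only [Fin.snoc_castSucc, Fin.snoc_last, if_pos rfl]
          simp
          linear_combination hcs
    · intro i
      induction i using Fin.lastCases with
      | cast i =>
        rw [Fin.sum_univ_castSucc, Fin.sum_univ_castSucc]
        simp only [Fin.snoc_castSucc, Fin.snoc_last]
        have key := hQd i
        rw [Fin.sum_univ_castSucc] at key
        have h1 : ∑ j : Fin k, e (Fin.castSucc j) * Q' i (Fin.castSucc j) ^ 2
            = ∑ j : Fin k, d (Fin.castSucc (Fin.castSucc j)) * Q' i (Fin.castSucc j) ^ 2 :=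
          Finset.sum_congr rfl fun j _ => by rw [he_cast]
        rw [h1, he_last] at key
        linear_combination key + Q' i (Fin.last k) ^ 2 * hmu
      | last =>
        rw [Fin.sum_univ_castSucc, Fin.sum_univ_castSucc]
        simp only [Fin.snoc_castSucc, Fin.snoc_last]
        simp
        linear_combination hzero

/-- charpoly is invariant under orthogonal conjugation. -/
private lemma charpoly_conj {N : ℕ} (Q M : Matrix (Fin N) (Fin N) ℝ)
    (h : Q * Qᵀ = 1) : (Q * M * Qᵀ).charpoly = M.charpoly := by
  set f := (Polynomial.C : ℝ →+* ℝ[X]) with hf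
  have hmaps : Q.map f * Qᵀ.map f = 1 := by
    rw [← Matrix.map_mul, h, Matrix.map_one f (map_zero f) (map_one f)]
  have key : charmatrix (Q * M * Qᵀ) = Q.map f * charmatrix M * Qᵀ.map f := by
    rw [charmatrix, charmatrix, Matrix.mul_sub, Matrix.sub_mul]
    congr 1
    · have hcomm : Q.map f * Matrix.scalar (Fin N) (X : ℝ[X])
          = Matrix.scalar (Fin N) (X : ℝ[X]) * Q.map f :=
        (Matrix.scalar_commute (X : ℝ[X]) (fun r => Commute.all _ _) (Q.map f)).symm
      rw [hcomm, Matrix.mul_assoc, hmaps, Matrix.mul_one]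
    · rw [RingHom.mapMatrix_apply, RingHom.mapMatrix_apply, Matrix.map_mul, Matrix.map_mul]
  have hdet : (Q.map f).det * (Qᵀ.map f).det = 1 := by
    rw [← Matrix.det_mul, hmaps, Matrix.det_one]
  rw [Matrix.charpoly, Matrix.charpoly, key, Matrix.det_mul, Matrix.det_mul]
  calc (Q.map f).det * (charmatrix M).det * (Qᵀ.map f).det
      = (Q.map f).det * (Qᵀ.map f).det * (charmatrix M).det := by ring
    _ = (charmatrix M).det := by rw [hdet, one_mul]

private lemma charpoly_diag {N : ℕ} (v : Fin N → ℝ) :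
    (Matrix.diagonal v).charpoly = ∏ i, (X - C (v i)) := by
  have hcm : charmatrix (Matrix.diagonal v) = Matrix.diagonal (fun i => X - C (v i)) := by
    ext i j
    rcases eq_or_ne i j with rfl | hij
    · simp [charmatrix_apply, Matrix.diagonal_apply_eq]
    · simp [charmatrix_apply, Matrix.diagonal_apply_ne _ hij, hij]
  rw [Matrix.charpoly, hcm, Matrix.det_diagonal]

/-- There is a real symmetric matrix with zero diagonal whose eigenvalues are
`λ_1 ≥ ⋯ ≥ λ_{m-1} > 0` and `λ_m = -(λ_1 + ⋯ + λ_{m-1})`; the eigenvalues are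
specified via the characteristic polynomial. -/
theorem stmt_13 {m : ℕ} (hm : 1 ≤ m) (lam : Fin m → ℝ)
    (hmono : ∀ i j : Fin m, i ≤ j → lam j ≤ lam i)
    (hpos : ∀ i : Fin m, (i : ℕ) < m - 1 → 0 < lam i)
    (hsum : ∑ i, lam i = 0) :
    ∃ H : Matrix (Fin m) (Fin m) ℝ, H.IsSymm ∧ (∀ i, H i i = 0) ∧
      H.charpoly = ∏ i, (Polynomial.X - Polynomial.C (lam i)) := by
  obtain ⟨n, rfl⟩ : ∃ n, m = n + 1 := ⟨m - 1, by omega⟩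
  have hd : ∀ i : Fin (n + 1), i ≠ Fin.last n → 0 ≤ lam i := by
    intro i hi
    have h1 : (i : ℕ) ≠ n := fun h => hi (Fin.ext h)
    have h2 : (i : ℕ) < n + 1 := i.isLt
    exact (hpos i (by omega)).le
  obtain ⟨Q, hOrth, hDiag⟩ := coreLast n lam hd hsum
  have hQQT : Q * Qᵀ = 1 := by
    ext i j
    simpa [Matrix.mul_apply, Matrix.one_apply] using hOrth i j
  refine ⟨Q * Matrix.diagonal lam * Qᵀ, ?_, ?_, ?_⟩
  · show (Q * Matrix.diagonal lam * Qᵀ)ᵀ = _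
    rw [Matrix.transpose_mul, Matrix.transpose_mul, Matrix.transpose_transpose,
      Matrix.diagonal_transpose, Matrix.mul_assoc]
  · intro i
    calc (Q * Matrix.diagonal lam * Qᵀ) i i
        = ∑ a, Q i a * lam a * Q i a := by
          conv_lhs => rw [Matrix.mul_apply]
          simp only [Matrix.mul_diagonal, Matrix.transpose_apply]
      _ = ∑ a, lam a * Q i a ^ 2 := Finset.sum_congr rfl fun a _ => by ring
      _ = 0 := hDiag i
  · rw [charpoly_conj Q _ hQQT, charpoly_diag]
end
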